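/- Let f1, f2 : S → ℝ be continuous on a nonempty compact set S with f2 strictly positive, and F(η) = max_{x ∈ S} (f1(x) − η·f2(x)). Then F(η*) = 0 holds if and only if η* = max_{x ∈ S} f1(x)/f2(x). -/

import Mathlib

/-! Since `f2 > 0`, for each `x` we have `f1 x - η f2 x ≤ 0 ↔ f1 x / f2 x ≤ η`, with equality on the
left exactly when it holds on the right. Hence `0` is the greatest value of `f1 - η f2` on `S` iff
`η` is the greatest value of `f1 / f2` on `S`; by compactness both suprema are attained, so each is
the greatest value. -/

theorem IsCompact.sSup_eq_iff_isGreatest {α : Type*} [ConditionallyCompleteLinearOrder α]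
    [TopologicalSpace α] [ClosedIciTopology α] {s : Set α} (hs : IsCompact s) (hne : s.Nonempty)
    {a : α} : sSup s = a ↔ IsGreatest s a :=
  ⟨fun h => h ▸ hs.isGreatest_sSup hne, IsGreatest.csSup_eq⟩

section Dinkelbach

variable {E : Type*} {S : Set E} {f1 f2 : E → ℝ}

theorem isGreatest_image_sub_mul_iff_isGreatest_image_div (hf2pos : ∀ x ∈ S, 0 < f2 x) (η : ℝ) :
    IsGreatest ((fun x => f1 x - η * f2 x) '' S) 0 ↔
      IsGreatest ((fun x => f1 x / f2 x) '' S) η := by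
  have hle : ∀ x ∈ S, f1 x - η * f2 x ≤ 0 ↔ f1 x / f2 x ≤ η := fun x hx => by
    rw [div_le_iff₀ (hf2pos x hx), sub_nonpos]
  have heq : ∀ x ∈ S, f1 x - η * f2 x = 0 ↔ f1 x / f2 x = η := fun x hx => by
    rw [div_eq_iff (hf2pos x hx).ne', sub_eq_zero]
  simp only [IsGreatest, mem_upperBounds, Set.forall_mem_image]
  simp only [Set.mem_image]
  exact and_congr (exists_congr fun x => and_congr_right (heq x))
    (forall₂_congr hle)

end Dinkelbach

/-- Dinkelbach's theorem: with f1, f2 continuous on a nonempty compact set S and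
f2 > 0 on S, F(η*) = 0 iff η* is the maximum of the ratio f1/f2 over S. -/
theorem stmt_1 {E : Type*} [TopologicalSpace E] (S : Set E) (hS : IsCompact S)
    (hne : S.Nonempty) (f1 f2 : E → ℝ)
    (hf1 : ContinuousOn f1 S) (hf2 : ContinuousOn f2 S)
    (hf2pos : ∀ x ∈ S, 0 < f2 x) (η : ℝ) :
    sSup ((fun x => f1 x - η * f2 x) '' S) = 0 ↔
      η = sSup ((fun x => f1 x / f2 x) '' S) := by
  have hsub : ContinuousOn (fun x => f1 x - η * f2 x) S := hf1.sub (continuousOn_const.mul hf2)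
  have hdiv : ContinuousOn (fun x => f1 x / f2 x) S := hf1.div hf2 fun x hx => (hf2pos x hx).ne'
  rw [(hS.image_of_continuousOn hsub).sSup_eq_iff_isGreatest (hne.image _), eq_comm,
    (hS.image_of_continuousOn hdiv).sSup_eq_iff_isGreatest (hne.image _)]
  exact isGreatest_image_sub_mul_iff_isGreatest_image_div hf2pos η
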